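/- arXiv:1310.8400 — 3 statements merged into one kernel-verified Lean document; each statement's English description precedes it below -/
import Mathlib

section
/- Let A be a weakly noetherian B₁-algebra and let I be a saturated ideal of A. Then there exist finitely many saturated prime ideals P₁, …, Pₙ of A such that r(I) = P₁ ∩ … ∩ Pₙ. -/
/-- An ideal `I` of a `B₁`-algebra is *saturated* if `y ∈ I` and `x + y = y` imply `x ∈ I`. -/
def IsSaturated {A : Type*} [CommSemiring A] (I : Ideal A) : Prop :=
  ∀ x y : A, y ∈ I → x + y = y → x ∈ I

/-- The radical `r(S) = {x | xⁿ ∈ S for some n ≥ 1}` of a subset `S`. -/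
def rad {A : Type*} [CommSemiring A] (S : Set A) : Set A :=
  {x | ∃ n : ℕ, 1 ≤ n ∧ x ^ n ∈ S}

/-- `A` is *weakly noetherian* if every ascending chain of saturated ideals is eventually
stationary. -/
def WeaklyNoetherian (A : Type*) [CommSemiring A] : Prop :=
  ∀ f : ℕ → Ideal A, (∀ n, IsSaturated (f n)) → (∀ n, f n ≤ f (n + 1)) →
    ∃ N, ∀ n, N ≤ n → f n = f N

/-!
Write `x ≤ y` for `x + y = y`. In a `B₁`-algebra this order is compatible with products, and the
saturated ideals are the ideals closed downwards. Consequently `r(sat K) ∩ r(sat L) ⊆ r(sat (K L))`,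
where `sat K` is the smallest saturated ideal containing `K`, exactly as for radicals in a ring.
So a saturated radical ideal `J` that is neither `A` nor prime, say with `a b ∈ J` and `a, b ∉ J`,
is the intersection of `r(sat (J + (a)))` and `r(sat (J + (b)))`, two strictly larger saturated
ideals, and noetherian induction over the saturated ideals applies.
-/

section B1

variable {A : Type*} [CommSemiring A]

theorem add_self_of_one_add_one (h : (1 : A) + 1 = 1) (a : A) : a + a = a := by
  calc a + a = a * (1 + 1) := by ring
    _ = a := by rw [h, mul_one]

theorem mul_add_mul_eq_of_add_eq (h : (1 : A) + 1 = 1) {x y x' y' : A}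
    (hx : x + y = y) (hx' : x' + y' = y') : x * x' + y * y' = y * y' := by
  have expand : (x + y) * (x' + y') = x * x' + (x * y' + y * x' + y * y') := by ring
  calc x * x' + y * y' = x * x' + (x + y) * (x' + y') := by rw [hx, hx']
    _ = (x * x' + x * x') + (x * y' + y * x' + y * y') := by ring
    _ = (x + y) * (x' + y') := by rw [add_self_of_one_add_one h, expand]
    _ = y * y' := by rw [hx, hx']

theorem pow_add_pow_eq_of_add_eq (h : (1 : A) + 1 = 1) {x y : A} (hx : x + y = y) (n : ℕ) :
    x ^ n + y ^ n = y ^ n := by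
  induction n with
  | zero => simpa using h
  | succ n ih => simpa [pow_succ] using mul_add_mul_eq_of_add_eq h ih hx

def saturation (K : Ideal A) : Ideal A where
  carrier := {x | ∃ y ∈ K, x + y = y}
  zero_mem' := ⟨0, K.zero_mem, zero_add 0⟩
  add_mem' := by
    rintro a b ⟨y, hy, hay⟩ ⟨y', hy', hby'⟩
    refine ⟨y + y', K.add_mem hy hy', ?_⟩
    rw [add_add_add_comm, hay, hby']
  smul_mem' := by
    rintro r a ⟨y, hy, hay⟩
    exact ⟨r * y, K.mul_mem_left r hy, by rw [smul_eq_mul, ← mul_add, hay]⟩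

theorem le_saturation (h : (1 : A) + 1 = 1) (K : Ideal A) : K ≤ saturation K :=
  fun x hx => ⟨x, hx, add_self_of_one_add_one h x⟩

theorem saturation_le {K J : Ideal A} (hJ : IsSaturated J) (hKJ : K ≤ J) : saturation K ≤ J :=
  fun _ ⟨y, hy, hxy⟩ => hJ _ y (hKJ hy) hxy

theorem isSaturated_saturation (K : Ideal A) : IsSaturated (saturation K) := by
  rintro x y ⟨z, hz, hyz⟩ hxy
  refine ⟨z, hz, ?_⟩
  calc x + z = (x + y) + z := by rw [add_assoc, hyz]
    _ = z := by rw [hxy, hyz]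

theorem IsSaturated.radical (h : (1 : A) + 1 = 1) {J : Ideal A} (hJ : IsSaturated J) :
    IsSaturated J.radical := by
  rintro x y ⟨n, hn⟩ hxy
  exact ⟨n, hJ _ _ hn (pow_add_pow_eq_of_add_eq h hxy n)⟩

theorem radical_saturation_inf_le (h : (1 : A) + 1 = 1) (K L : Ideal A) :
    (saturation K).radical ⊓ (saturation L).radical ≤ (saturation (K * L)).radical := by
  rintro x ⟨⟨n, y, hy, hxy⟩, ⟨m, y', hy', hxy'⟩⟩
  exact ⟨n + m, y * y', Ideal.mul_mem_mul hy hy', by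
    simpa [pow_add] using mul_add_mul_eq_of_add_eq h hxy hxy'⟩

theorem radical_saturation_sup_span_inf_eq (h : (1 : A) + 1 = 1) {J : Ideal A}
    (hJ : IsSaturated J) (hJr : J.IsRadical) {a b : A} (hab : a * b ∈ J) :
    (saturation (J ⊔ Ideal.span {a})).radical ⊓ (saturation (J ⊔ Ideal.span {b})).radical
      = J := by
  have hmul : (J ⊔ Ideal.span {a}) * (J ⊔ Ideal.span {b}) ≤ J := by
    rw [Ideal.sup_mul, Ideal.mul_sup, Ideal.mul_sup, Ideal.span_singleton_mul_span_singleton]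
    exact sup_le (sup_le Ideal.mul_le_left Ideal.mul_le_left)
      (sup_le Ideal.mul_le_right ((Ideal.span_singleton_le_iff_mem J).mpr hab))
  have hle : ∀ c : A, J ≤ (saturation (J ⊔ Ideal.span {c})).radical := fun c =>
    le_sup_left.trans ((le_saturation h _).trans Ideal.le_radical)
  refine le_antisymm ?_ (le_inf (hle a) (hle b))
  calc _ ≤ (saturation ((J ⊔ Ideal.span {a}) * (J ⊔ Ideal.span {b}))).radical :=
        radical_saturation_inf_le h _ _
    _ ≤ J.radical := Ideal.radical_mono (saturation_le hJ hmul)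
    _ = J := hJr.radical

theorem lt_saturation_sup_span (h : (1 : A) + 1 = 1) {J : Ideal A} {c : A} (hc : c ∉ J) :
    J < saturation (J ⊔ Ideal.span {c}) :=
  SetLike.lt_iff_le_and_exists.mpr ⟨le_sup_left.trans (le_saturation h _),
    c, le_saturation h _ (Ideal.mem_sup_right (Ideal.mem_span_singleton_self c)), hc⟩

theorem rad_eq_radical (J : Ideal A) : rad (J : Set A) = J.radical := by
  ext x
  refine ⟨fun ⟨n, _, hn⟩ => ⟨n, hn⟩, fun ⟨n, hn⟩ => ?_⟩
  rcases Nat.eq_zero_or_pos n with rfl | hpos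
  · exact ⟨1, le_rfl, by simpa using J.mul_mem_left x hn⟩
  · exact ⟨n, hpos, hn⟩

theorem WeaklyNoetherian.wellFoundedGT (hwn : WeaklyNoetherian A) :
    WellFoundedGT {J : Ideal A // IsSaturated J} := by
  refine wellFoundedGT_iff_monotone_chain_condition.mpr fun f => ?_
  obtain ⟨N, hN⟩ := hwn (fun n => (f n).1) (fun n => (f n).2)
    (fun n => f.monotone n.le_succ)
  exact ⟨N, fun m hm => Subtype.ext (hN m hm).symm⟩

def IsFiniteInterSatPrime (S : Set A) : Prop :=
  ∃ (n : ℕ) (P : Fin n → Ideal A),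
    (∀ i, IsSaturated (P i) ∧ (P i).IsPrime) ∧ S = ⋂ i, ((P i : Ideal A) : Set A)

namespace IsFiniteInterSatPrime

theorem univ : IsFiniteInterSatPrime (Set.univ : Set A) :=
  ⟨0, Fin.elim0, fun i => i.elim0, Set.iInter_of_empty _ |>.symm⟩

theorem of_isPrime {P : Ideal A} (hP : IsSaturated P) (hp : P.IsPrime) :
    IsFiniteInterSatPrime (P : Set A) :=
  ⟨1, fun _ => P, fun _ => ⟨hP, hp⟩, (Set.iInter_const _).symm⟩

theorem inter {S T : Set A} (hS : IsFiniteInterSatPrime S) (hT : IsFiniteInterSatPrime T) :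
    IsFiniteInterSatPrime (S ∩ T) := by
  obtain ⟨m, P, hP, rfl⟩ := hS
  obtain ⟨n, Q, hQ, rfl⟩ := hT
  refine ⟨m + n, Fin.append P Q, ?_, ?_⟩
  · simpa [Fin.forall_fin_add] using And.intro hP hQ
  · ext x
    simp [Fin.forall_fin_add]

end IsFiniteInterSatPrime

theorem isFiniteInterSatPrime_radical (h : (1 : A) + 1 = 1) (hwn : WeaklyNoetherian A)
    {J : Ideal A} (hJ : IsSaturated J) : IsFiniteInterSatPrime (J.radical : Set A) := by
  have := hwn.wellFoundedGT
  suffices ∀ J : {J : Ideal A // IsSaturated J}, IsFiniteInterSatPrime (J.1.radical : Set A) from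
    this ⟨J, hJ⟩
  intro J
  induction J using WellFoundedGT.induction with | _ J ih => ?_
  obtain ⟨J, hJ⟩ := J
  by_cases hlt : J < J.radical
  · simpa [Ideal.radical_idem] using ih ⟨J.radical, hJ.radical h⟩ hlt
  have hJr : J.IsRadical := (Ideal.le_radical.lt_or_eq.resolve_left hlt).ge
  rw [hJr.radical]
  by_cases htop : J = ⊤
  · simpa [htop] using IsFiniteInterSatPrime.univ
  by_cases hprime : J.IsPrime
  · exact .of_isPrime hJ hprime
  obtain ⟨a, b, hab, ha, hb⟩ : ∃ a b, a * b ∈ J ∧ a ∉ J ∧ b ∉ J := by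
    simpa [Ideal.isPrime_iff, htop, not_or] using hprime
  have bigger : ∀ c ∉ J,
      IsFiniteInterSatPrime ((saturation (J ⊔ Ideal.span {c})).radical : Set A) :=
    fun c hc => ih ⟨_, isSaturated_saturation _⟩ (lt_saturation_sup_span h hc)
  rw [← radical_saturation_sup_span_inf_eq h hJ hJr hab, Submodule.coe_inf]
  exact (bigger a ha).inter (bigger b hb)

end B1

/-- In a weakly noetherian `B₁`-algebra, the radical of a saturated ideal is a finite
intersection of saturated prime ideals. -/
theorem rad_saturated_eq_inter_primes {A : Type*} [CommSemiring A]
    (hchar : (1 : A) + 1 = 1) (hwn : WeaklyNoetherian A) (I : Ideal A)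
    (hIsat : IsSaturated I) :
    ∃ (n : ℕ) (P : Fin n → Ideal A),
      (∀ i, IsSaturated (P i) ∧ (P i).IsPrime) ∧
        rad (I : Set A) = ⋂ i, ((P i : Ideal A) : Set A) := by
  rw [rad_eq_radical]
  exact isFiniteInterSatPrime_radical hchar hwn hIsat
end

section
/- Let A be a laskerian B₁-algebra. Then A has the Evans property: for every saturated ideal I of A, the set D_A(I) = {x ∈ A : ∃ y ∉ I, xy ∈ I} is a finite union of saturated prime ideals of A. -/
/-- An ideal `Q` is *primary* if `Q ≠ A` and `x * y ∈ Q` implies `x ∈ Q` or `yⁿ ∈ Q` for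
some `n ≥ 1`. -/
def IsPrimaryI {A : Type*} [CommSemiring A] (Q : Ideal A) : Prop :=
  Q ≠ ⊤ ∧ ∀ x y : A, x * y ∈ Q → x ∈ Q ∨ ∃ n : ℕ, 1 ≤ n ∧ y ^ n ∈ Q

/-- `A` is *laskerian* if every saturated ideal of `A` is a finite intersection of saturated
primary ideals. -/
def Laskerian (A : Type*) [CommSemiring A] : Prop :=
  ∀ I : Ideal A, IsSaturated I → ∃ (n : ℕ) (Q : Fin n → Ideal A),
    (∀ i, IsSaturated (Q i) ∧ IsPrimaryI (Q i)) ∧ I = ⨅ i, Q i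

section Aux

variable {A : Type*} [CommSemiring A]

lemma idem_add (hchar : (1 : A) + 1 = 1) (a : A) : a + a = a := by
  calc a + a = a * (1 + 1) := by ring
  _ = a := by rw [hchar, mul_one]

lemma pow_add_pow_eq (hchar : (1 : A) + 1 = 1) {x y : A} (hxy : x + y = y) :
    ∀ n : ℕ, x ^ n + y ^ n = y ^ n := by
  intro n
  induction n with
  | zero => simpa using hchar
  | succ n hn =>
    have h1 : y ^ (n + 1) = (x ^ n + y ^ n) * (x + y) := by rw [hn, hxy, pow_succ]
    calc x ^ (n + 1) + y ^ (n + 1)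
        = x ^ (n + 1) + (x ^ n + y ^ n) * (x + y) := by rw [← h1]
      _ = (x ^ (n + 1) + x ^ (n + 1)) + (x ^ n * y + y ^ n * x + y ^ n * y) := by ring
      _ = x ^ (n + 1) + (x ^ n * y + y ^ n * x + y ^ n * y) := by rw [idem_add hchar]
      _ = (x ^ n + y ^ n) * (x + y) := by ring
      _ = y ^ (n + 1) := h1.symm

lemma rad_saturated (hchar : (1 : A) + 1 = 1) {Q : Ideal A} (hs : IsSaturated Q) :
    IsSaturated Q.radical := by
  intro x y hy hxy
  obtain ⟨n, hn⟩ := Ideal.mem_radical_iff.mp hy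
  exact Ideal.mem_radical_iff.mpr ⟨n, hs _ _ hn (pow_add_pow_eq hchar hxy n)⟩

lemma rad_prime {Q : Ideal A} (hp : IsPrimaryI Q) : Q.radical.IsPrime := by
  constructor
  · intro h
    apply hp.1
    have h1 : (1 : A) ∈ Q.radical := by rw [h]; trivial
    obtain ⟨n, hn⟩ := Ideal.mem_radical_iff.mp h1
    rw [one_pow] at hn
    exact (Ideal.eq_top_iff_one Q).mpr hn
  · intro x y hxy
    obtain ⟨n, hn⟩ := Ideal.mem_radical_iff.mp hxy
    rw [mul_pow] at hn
    rcases hp.2 _ _ hn with h | ⟨m, _, hm⟩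
    · exact Or.inl (Ideal.mem_radical_iff.mpr ⟨n, h⟩)
    · exact Or.inr (Ideal.mem_radical_iff.mpr ⟨n * m, by rwa [pow_mul]⟩)

lemma evans_aux (hchar : (1 : A) + 1 = 1) :
    ∀ n : ℕ, ∀ Q : Fin n → Ideal A, (∀ i, IsSaturated (Q i) ∧ IsPrimaryI (Q i)) →
      ∃ (m : ℕ) (P : Fin m → Ideal A),
        (∀ i, IsSaturated (P i) ∧ (P i).IsPrime) ∧
          {x : A | ∃ y : A, y ∉ (⨅ i, Q i) ∧ x * y ∈ (⨅ i, Q i)}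
            = ⋃ i, ((P i : Ideal A) : Set A) := by
  intro n
  induction n with
  | zero =>
    intro Q _
    refine ⟨0, Fin.elim0, fun i => i.elim0, ?_⟩
    have : (⨅ i : Fin 0, Q i) = ⊤ := by simp
    rw [this]
    simp
  | succ n IH =>
    intro Q hQ
    by_cases hred : ∃ i : Fin (n + 1), (⨅ k, Q (i.succAbove k)) ≤ Q i
    · -- one component is redundant; drop it
      obtain ⟨i, hle⟩ := hred
      set Q' : Fin n → Ideal A := fun k => Q (i.succAbove k) with hQ'def
      have heq : (⨅ k, Q' k) = ⨅ j, Q j := by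
        apply le_antisymm
        · refine le_iInf fun j => ?_
          by_cases hji : j = i
          · subst hji; exact hle
          · obtain ⟨k, hk⟩ := Fin.exists_succAbove_eq hji
            exact hk ▸ iInf_le Q' k
        · exact le_iInf fun k => iInf_le Q (i.succAbove k)
      obtain ⟨m, P, hP, hset⟩ := IH Q' (fun k => hQ (i.succAbove k))
      exact ⟨m, P, hP, by rw [← heq]; exact hset⟩
    · -- irredundant decomposition
      push_neg at hred
      refine ⟨n + 1, fun i => (Q i).radical,
        fun i => ⟨rad_saturated hchar (hQ i).1, rad_prime (hQ i).2⟩, ?_⟩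
      ext x
      simp only [Set.mem_setOf_eq, Set.mem_iUnion, SetLike.mem_coe]
      constructor
      · rintro ⟨y, hyI, hxy⟩
        have : ∃ j, y ∉ Q j := by
          by_contra h
          push_neg at h
          exact hyI (Ideal.mem_iInf.mpr h)
        obtain ⟨j, hyj⟩ := this
        have hxyj : y * x ∈ Q j := by
          rw [mul_comm]; exact Ideal.mem_iInf.mp hxy j
        rcases (hQ j).2.2 _ _ hxyj with h | ⟨m, _, hm⟩
        · exact absurd h hyj
        · exact ⟨j, Ideal.mem_radical_iff.mpr ⟨m, hm⟩⟩
      · rintro ⟨i, hxi⟩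
        obtain ⟨N, hN⟩ := Ideal.mem_radical_iff.mp hxi
        -- pick a witness y ∈ ⨅_{j ≠ i} Q j with y ∉ Q i
        obtain ⟨y, hy1, hy2⟩ := SetLike.not_le_iff_exists.mp (hred i)
        have key : ∀ m : ℕ, x ^ m * y ∈ (⨅ j, Q j) →
            ∃ z : A, z ∉ (⨅ j, Q j) ∧ x * z ∈ (⨅ j, Q j) := by
          intro m
          induction m with
          | zero =>
            intro h
            rw [pow_zero, one_mul] at h
            exact absurd (iInf_le Q i h) hy2
          | succ m ihm =>
            intro h
            by_cases h' : x ^ m * y ∈ (⨅ j, Q j)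
            · exact ihm h'
            · exact ⟨x ^ m * y, h', by rwa [← mul_assoc, ← pow_succ']⟩
        apply key N
        rw [Ideal.mem_iInf]
        intro j
        by_cases hji : j = i
        · subst hji; exact Ideal.mul_mem_right _ _ hN
        · obtain ⟨k, hk⟩ := Fin.exists_succAbove_eq hji
          have : y ∈ Q (i.succAbove k) := Ideal.mem_iInf.mp hy1 k
          rw [hk] at this
          exact Ideal.mul_mem_left _ _ this

end Aux

/-- A laskerian `B₁`-algebra has the Evans property: for every saturated ideal `I`,
`D_A(I) = {x | ∃ y ∉ I, x * y ∈ I}` is a finite union of saturated prime ideals. -/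
theorem laskerian_evans {A : Type*} [CommSemiring A] (hchar : (1 : A) + 1 = 1)
    (hlask : Laskerian A) :
    ∀ I : Ideal A, IsSaturated I →
      ∃ (n : ℕ) (P : Fin n → Ideal A),
        (∀ i, IsSaturated (P i) ∧ (P i).IsPrime) ∧
          {x : A | ∃ y : A, y ∉ I ∧ x * y ∈ I} = ⋃ i, ((P i : Ideal A) : Set A) := by
  intro I hsat
  obtain ⟨n, Q, hQ, rfl⟩ := hlask I hsat
  exact evans_aux hchar n Q hQ
end

section
/- Let A be a weakly noetherian B₁-algebra. Then A has the Evans property: for every saturated ideal I of A, the set D_A(I) = {x ∈ A : ∃ y ∉ I, xy ∈ I} is a finite union of saturated prime ideals of A. -/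
section Aux

variable {A : Type*} [CommSemiring A]

/-- The colon ideal `(I : y)`. -/
def clid (I : Ideal A) (y : A) : Ideal A where
  carrier := {x | x * y ∈ I}
  add_mem' := by
    intro a b ha hb
    simp only [Set.mem_setOf_eq] at *
    rw [add_mul]; exact I.add_mem ha hb
  zero_mem' := by simp
  smul_mem' := by
    intro c x hx
    simp only [smul_eq_mul, Set.mem_setOf_eq] at *
    rw [mul_assoc]; exact I.mul_mem_left c hx

lemma mem_clid {I : Ideal A} {y x : A} : x ∈ clid I y ↔ x * y ∈ I := Iff.rfl

lemma clid_saturated {I : Ideal A} (hI : IsSaturated I) (y : A) : IsSaturated (clid I y) := by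
  intro a b hb hab
  rw [mem_clid] at hb ⊢
  exact hI _ _ hb (by rw [← add_mul, hab])

/-- The ideal `(I : ⋂_{i < n} P i)`. -/
def wid (I : Ideal A) (P : ℕ → Ideal A) (n : ℕ) : Ideal A where
  carrier := {x | ∀ q : A, (∀ i, i < n → q ∈ P i) → x * q ∈ I}
  add_mem' := by
    intro a b ha hb
    simp only [Set.mem_setOf_eq] at *
    intro q hq
    rw [add_mul]; exact I.add_mem (ha q hq) (hb q hq)
  zero_mem' := by intro q _; simp
  smul_mem' := by
    intro c x hx
    simp only [smul_eq_mul, Set.mem_setOf_eq] at *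
    intro q hq
    rw [mul_assoc]; exact I.mul_mem_left c (hx q hq)

lemma mem_wid {I : Ideal A} {P : ℕ → Ideal A} {n : ℕ} {x : A} :
    x ∈ wid I P n ↔ ∀ q : A, (∀ i, i < n → q ∈ P i) → x * q ∈ I := Iff.rfl

lemma wid_saturated {I : Ideal A} (hI : IsSaturated I) (P : ℕ → Ideal A) (n : ℕ) :
    IsSaturated (wid I P n) := by
  intro a b hb hab
  rw [mem_wid] at hb ⊢
  intro q hq
  exact hI _ _ (hb q hq) (by rw [← add_mul, hab])

lemma wid_mono {I : Ideal A} (P : ℕ → Ideal A) (n : ℕ) : wid I P n ≤ wid I P (n + 1) := by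
  intro x hx
  rw [mem_wid] at hx ⊢
  intro q hq
  exact hx q (fun i hi => hq i (Nat.lt_succ_of_lt hi))

/-- Every member of a family of saturated ideals lies below a maximal member. -/
lemma exists_maximal (hwn : WeaklyNoetherian A) {S : Set (Ideal A)}
    (hS : ∀ J ∈ S, IsSaturated J) {J : Ideal A} (hJ : J ∈ S) :
    ∃ P ∈ S, J ≤ P ∧ ∀ Q ∈ S, P ≤ Q → P = Q := by
  by_contra h
  push_neg at h
  have step : ∀ P : {P : Ideal A // P ∈ S ∧ J ≤ P}, ∃ Q : {P : Ideal A // P ∈ S ∧ J ≤ P},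
      P.1 ≤ Q.1 ∧ P.1 ≠ Q.1 := by
    rintro ⟨P, hPS, hJP⟩
    obtain ⟨Q, hQS, hPQ, hne⟩ := h P hPS hJP
    exact ⟨⟨Q, hQS, le_trans hJP hPQ⟩, hPQ, hne⟩
  choose g hg1 hg2 using step
  let f : ℕ → {P : Ideal A // P ∈ S ∧ J ≤ P} := fun n => g^[n] ⟨J, hJ, le_refl J⟩
  have hfsucc : ∀ n, f (n + 1) = g (f n) := by
    intro n
    simp only [f, Function.iterate_succ', Function.comp_apply]
  have hsat : ∀ n, IsSaturated (f n).1 := fun n => hS _ (f n).2.1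
  have hmono : ∀ n, (f n).1 ≤ (f (n + 1)).1 := by
    intro n; rw [hfsucc]; exact hg1 (f n)
  obtain ⟨N, hN⟩ := hwn (fun n => (f n).1) hsat hmono
  have heq := hN (N + 1) (Nat.le_succ N)
  rw [hfsucc] at heq
  exact hg2 (f N) heq.symm

lemma prod_not_mem {Q : Ideal A} (hQ : Q.IsPrime) (s : Finset ℕ) (p : ℕ → A)
    (hp : ∀ i ∈ s, p i ∉ Q) : ∏ i ∈ s, p i ∉ Q := by
  classical
  induction s using Finset.induction_on with
  | empty =>
    simp only [Finset.prod_empty]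
    intro h1
    exact hQ.ne_top ((Ideal.eq_top_iff_one Q).2 h1)
  | @insert a s ha ih =>
    rw [Finset.prod_insert ha]
    intro hmem
    rcases hQ.mem_or_mem hmem with h1 | h2
    · exact hp a (Finset.mem_insert_self a s) h1
    · exact ih (fun i hi => hp i (Finset.mem_insert_of_mem hi)) h2

end Aux

/-- A weakly noetherian `B₁`-algebra has the Evans property: for every saturated ideal `I`,
`D_A(I) = {x | ∃ y ∉ I, x * y ∈ I}` is a finite union of saturated prime ideals. -/
theorem weaklyNoetherian_evans {A : Type*} [CommSemiring A] (hchar : (1 : A) + 1 = 1)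
    (hwn : WeaklyNoetherian A) :
    ∀ I : Ideal A, IsSaturated I →
      ∃ (n : ℕ) (P : Fin n → Ideal A),
        (∀ i, IsSaturated (P i) ∧ (P i).IsPrime) ∧
          {x : A | ∃ y : A, y ∉ I ∧ x * y ∈ I} = ⋃ i, ((P i : Ideal A) : Set A) := by
  intro I hI
  classical
  set F : Set (Ideal A) := {P | ∃ y : A, y ∉ I ∧ P = clid I y} with hF
  have hFsat : ∀ J ∈ F, IsSaturated J := by
    rintro J ⟨y, _, rfl⟩
    exact clid_saturated hI y
  set M : Set (Ideal A) := {P | P ∈ F ∧ ∀ Q ∈ F, P ≤ Q → P = Q} with hM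
  have hMprime : ∀ P ∈ M, P.IsPrime := by
    rintro P ⟨⟨y, hyI, rfl⟩, hmax⟩
    constructor
    · intro htop
      apply hyI
      have h1 : (1 : A) ∈ clid I y := htop ▸ Submodule.mem_top
      rw [mem_clid, one_mul] at h1
      exact h1
    · intro a b hab
      by_cases haP : a ∈ clid I y
      · exact Or.inl haP
      · right
        rw [mem_clid] at haP
        have hFmem : clid I (a * y) ∈ F := ⟨a * y, haP, rfl⟩
        have hle : clid I y ≤ clid I (a * y) := by
          intro x hx
          rw [mem_clid] at hx ⊢
          have hxa : x * (a * y) = a * (x * y) := by ring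
          rw [hxa]
          exact I.mul_mem_left a hx
        have heq := hmax _ hFmem hle
        rw [heq, mem_clid]
        have hba : b * (a * y) = a * b * y := by ring
        rw [hba]
        exact hab
  -- M is finite
  have hMfin : M.Finite := by
    by_contra hinf
    have hMinf : M.Infinite := hinf
    let e := hMinf.natEmbedding
    set P : ℕ → Ideal A := fun n => (e n).1 with hP
    have hPM : ∀ n, P n ∈ M := fun n => (e n).2
    have hPinj : ∀ m n : ℕ, P m = P n → m = n := fun m n hmn =>
      e.injective (Subtype.ext hmn)
    have hwit : ∀ n, ∃ y : A, y ∉ I ∧ P n = clid I y := fun n => (hPM n).1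
    choose y hyI hPy using hwit
    obtain ⟨N, hN⟩ := hwn (wid I P) (fun n => wid_saturated hI P n) (fun n => wid_mono P n)
    have hyin : y N ∈ wid I P (N + 1) := by
      rw [mem_wid]
      intro q hq
      have hqP : q ∈ P N := hq N (Nat.lt_succ_self N)
      rw [hPy N, mem_clid] at hqP
      rwa [mul_comm]
    have hynot : y N ∉ wid I P N := by
      have hpex : ∀ i : ℕ, ∃ p : A, i < N → p ∈ P i ∧ p ∉ P N := by
        intro i
        by_cases hi : i < N
        · have hne : P i ≠ P N := fun h => absurd (hPinj i N h) (Nat.ne_of_lt hi)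
          have hnle : ¬ P i ≤ P N := fun hle => hne ((hPM i).2 _ (hPM N).1 hle)
          obtain ⟨p, hp1, hp2⟩ := SetLike.not_le_iff_exists.1 hnle
          exact ⟨p, fun _ => ⟨hp1, hp2⟩⟩
        · exact ⟨1, fun h => absurd h hi⟩
      choose p hp using hpex
      set q : A := ∏ i ∈ Finset.range N, p i with hq
      have hqmem : ∀ i, i < N → q ∈ P i := by
        intro i hi
        rw [hq, ← Finset.mul_prod_erase _ p (Finset.mem_range.2 hi)]
        exact Ideal.mul_mem_right _ _ (hp i hi).1
      have hqnot : q ∉ P N :=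
        prod_not_mem (hMprime _ (hPM N)) _ p (fun i hi => (hp i (Finset.mem_range.1 hi)).2)
      intro hyw
      rw [mem_wid] at hyw
      have hyq : y N * q ∈ I := hyw q hqmem
      apply hqnot
      rw [hPy N, mem_clid, mul_comm]
      exact hyq
    apply hynot
    have heqN := hN (N + 1) (Nat.le_succ N)
    rw [← heqN]
    exact hyin
  obtain ⟨n, emb, hrange⟩ := hMfin.fin_embedding
  refine ⟨n, fun i => emb i, ?_, ?_⟩
  · intro i
    have hmem : emb i ∈ M := hrange ▸ Set.mem_range_self i
    exact ⟨hFsat _ hmem.1, hMprime _ hmem⟩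
  · ext x
    simp only [Set.mem_setOf_eq, Set.mem_iUnion, SetLike.mem_coe]
    constructor
    · rintro ⟨z, hzI, hxz⟩
      have hJF : clid I z ∈ F := ⟨z, hzI, rfl⟩
      obtain ⟨Pm, hPmF, hle, hmax⟩ := exists_maximal hwn hFsat hJF
      have hPmM : Pm ∈ M := ⟨hPmF, hmax⟩
      have hrng : Pm ∈ Set.range emb := hrange.symm ▸ hPmM
      obtain ⟨i, hi⟩ := hrng
      exact ⟨i, hi ▸ hle (mem_clid.2 hxz)⟩
    · rintro ⟨i, hxi⟩
      have hmem : emb i ∈ M := hrange ▸ Set.mem_range_self i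
      obtain ⟨z, hzI, hPz⟩ := hmem.1
      refine ⟨z, hzI, ?_⟩
      have : x ∈ clid I z := hPz ▸ hxi
      exact this
end
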